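/- Let X and Y be distinct Vamos pairs with X ∪ Y a circuit of the Vamos matroid, and suppose the dealer is a member of neither X nor Y. Then for any perfect secret sharing scheme, h(Y|X) ≤ 1 + 3λ. -/

import Mathlib

/-!
Let `Z = {x, w}` be the dealer's Vamos pair, `Y = {y₁, y₂}` and `x₁ ∈ X`. In `Γₓ` the set `X ∪ Y`
is unqualified, `X ∪ {w, y₁}` is qualified, and `{x₁, w, y₁}` is unqualified but becomes qualified
when `y₂` is added. For a perfect scheme `H(V, S) = H(V) + [V ∉ Γ] H(S)`, so monotonicity and
submodularity of `V ↦ H(V, S)` give `H(V) + 2 H(S) ≤ H(B) + H(C)` whenever `V ⊆ B ∪ C` is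
unqualified, `B` is qualified and some unqualified `A ⊆ B` becomes qualified when `C` is added.
With `V = X ∪ Y`, `B = X ∪ {w, y₁}` and `C = {y₂}` this reads
`h(Y|X) ≤ h(w) + h(y₁) + h(y₂) − 2 ≤ 1 + 3λ`.
-/

open MeasureTheory Finset

/-- Shannon entropy of a random variable with values in a finite type:
`H(f) = ∑ₐ −P(f = a)·log P(f = a)`. -/
noncomputable def shannonEntropy {Ω : Type} [MeasurableSpace Ω] {α : Type} [Fintype α]
    (μ : Measure Ω) (f : Ω → α) : ℝ :=
  ∑ a : α, Real.negMulLog ((μ (f ⁻¹' {a})).toReal)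

/-- A family of random variables on a common probability space: one (finite-valued)
random variable `secret` for the secret, and one random variable `share p` for the
share of each participant `p`. -/
structure Scheme (P : Type) [Fintype P] [DecidableEq P] where
  (Ω : Type)
  [mΩ : MeasurableSpace Ω]
  (μ : Measure Ω)
  [prob : IsProbabilityMeasure μ]
  (SecT : Type)
  [secFin : Fintype SecT]
  (ShT : P → Type)
  [shFin : ∀ p, Fintype (ShT p)]
  (secret : Ω → SecT)
  (share : (p : P) → Ω → ShT p)
  (secret_meas : ∀ s : Set SecT, MeasurableSet (secret ⁻¹' s))
  (share_meas : ∀ p, ∀ s : Set (ShT p), MeasurableSet (share p ⁻¹' s))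

namespace Scheme

variable {P : Type} [Fintype P] [DecidableEq P]

/-- `H(S)`: the entropy of the secret. -/
noncomputable def Hsec (S : Scheme P) : ℝ :=
  letI := S.mΩ; letI := S.secFin
  shannonEntropy S.μ S.secret

/-- `H(X)`: the joint entropy of the shares of the participants in `X`. -/
noncomputable def Hset (S : Scheme P) (X : Finset P) : ℝ :=
  letI := S.mΩ; letI := S.shFin
  shannonEntropy S.μ (fun ω => fun p : {y // y ∈ X} => S.share p.1 ω)

/-- `H(X ∪ {S})`: the joint entropy of the shares of the participants in `X`
together with the secret. -/
noncomputable def HsetS (S : Scheme P) (X : Finset P) : ℝ :=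
  letI := S.mΩ; letI := S.secFin; letI := S.shFin
  shannonEntropy S.μ (fun ω => ((fun p : {y // y ∈ X} => S.share p.1 ω), S.secret ω))

/-- The normalized entropy `h(X) = H(X)/H(S)`. -/
noncomputable def hset (S : Scheme P) (X : Finset P) : ℝ := S.Hset X / S.Hsec

/-- The conditional normalized entropy `h(X|Y) = h(X ∪ Y) − h(Y)`. -/
noncomputable def hcond (S : Scheme P) (X Y : Finset P) : ℝ :=
  S.hset (X ∪ Y) - S.hset Y

/-- `Σ` is a perfect secret sharing scheme for the access structure `Γ`:
the conditional entropy `H(S|X) = H(X ∪ {S}) − H(X)` equals `0` for every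
qualified set `X` and equals `H(S)` for every unqualified set `X`. -/
def IsPerfect (S : Scheme P) (Γ : Finset P → Prop) : Prop :=
  (∀ X : Finset P, Γ X → S.HsetS X - S.Hset X = 0) ∧
  (∀ X : Finset P, ¬ Γ X → S.HsetS X - S.Hset X = S.Hsec)

end Scheme
/-- The four Vamos pairs `A = {v₁,v₂}`, `B = {v₃,v₄}`, `C = {v₅,v₆}`, `D = {v₇,v₈}`,
where participant `vᵢ` is represented by `(i-1 : Fin 8)`. -/
def pairA : Finset (Fin 8) := {0, 1}
def pairB : Finset (Fin 8) := {2, 3}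
def pairC : Finset (Fin 8) := {4, 5}
def pairD : Finset (Fin 8) := {6, 7}

/-- `X` is one of the four Vamos pairs. -/
def IsVamosPair (X : Finset (Fin 8)) : Prop :=
  X = pairA ∨ X = pairB ∨ X = pairC ∨ X = pairD

/-- The dependent sets of the Vamos matroid: the five special four-element sets
`AB`, `AC`, `BC`, `BD`, `CD`, and all sets with at least five elements. -/
def VamosDep (X : Finset (Fin 8)) : Prop :=
  X = pairA ∪ pairB ∨ X = pairA ∪ pairC ∨ X = pairB ∪ pairC ∨
    X = pairB ∪ pairD ∨ X = pairC ∪ pairD ∨ 5 ≤ X.card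

/-- The circuits of the Vamos matroid: minimal dependent sets. -/
def VamosCircuit (X : Finset (Fin 8)) : Prop :=
  VamosDep X ∧ ∀ Y ⊂ X, ¬ VamosDep Y

/-- The access structure `Γₓ` induced by the Vamos matroid with dealer `x`
(the dealer is regarded as a participant who is individually qualified):
a set is qualified iff it contains a minimal qualified set, the minimal
qualified sets being `{x}` and the sets `M ⊆ Q \ {x}` with `M ∪ {x}` a circuit. -/
def VamosQualified (x : Fin 8) (Y : Finset (Fin 8)) : Prop :=
  x ∈ Y ∨ ∃ M ⊆ Y, x ∉ M ∧ VamosCircuit (insert x M)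

/-- `λ = (max₁≤ᵢ≤₈ h({vᵢ})) − 1`. -/
noncomputable def Scheme.lam (S : Scheme (Fin 8)) : ℝ :=
  (Finset.univ.sup' Finset.univ_nonempty fun i : Fin 8 => S.hset {i}) - 1

/-- The information rate `ρ(Σ) = min₁≤ᵢ≤₈ H(S)/H(vᵢ)` of a scheme. -/
noncomputable def Scheme.rho (S : Scheme (Fin 8)) : ℝ :=
  Finset.univ.inf' Finset.univ_nonempty fun i : Fin 8 => S.Hsec / S.Hset {i}


open Real

theorem negMulLog_sum_le_sum_negMulLog {ι : Type*} (s : Finset ι) {q : ι → ℝ}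
    (hq : ∀ i ∈ s, 0 ≤ q i) : negMulLog (∑ i ∈ s, q i) ≤ ∑ i ∈ s, negMulLog (q i) := by
  rw [negMulLog, neg_mul, sum_mul, ← sum_neg_distrib]
  refine sum_le_sum fun i hi => ?_
  rcases (hq i hi).eq_or_lt with h0 | h0
  · simp [← h0]
  · rw [negMulLog, neg_mul, neg_le_neg_iff]
    exact mul_le_mul_of_nonneg_left (log_le_log h0 (single_le_sum hq hi)) h0.le

/-- Gibbs' inequality. -/
theorem sum_mul_log_le_sum_mul_log {ι : Type*} (s : Finset ι) {p q : ι → ℝ}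
    (hp : ∀ i ∈ s, 0 ≤ p i) (hq : ∀ i ∈ s, 0 ≤ q i) (hpq : ∀ i ∈ s, 0 < p i → 0 < q i)
    (hsum : ∑ i ∈ s, q i ≤ ∑ i ∈ s, p i) :
    ∑ i ∈ s, p i * log (q i) ≤ ∑ i ∈ s, p i * log (p i) := by
  have hterm : ∀ i ∈ s, p i * log (q i) - p i * log (p i) ≤ q i - p i := by
    intro i hi
    rcases (hp i hi).eq_or_lt with h0 | h0
    · simp [← h0, hq i hi]
    · have hlog := log_le_sub_one_of_pos (div_pos (hpq i hi h0) h0)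
      rw [log_div (hpq i hi h0).ne' h0.ne'] at hlog
      have hmul := mul_le_mul_of_nonneg_left hlog h0.le
      have hcancel : p i * (q i / p i - 1) = q i - p i := by field_simp
      linarith
  have := sum_le_sum hterm
  rw [sum_sub_distrib, sum_sub_distrib] at this
  linarith

theorem sum_sum_negMulLog_add_negMulLog_sum_sum_le {β γ : Type*} [Fintype β] [Fintype γ]
    (q : β → γ → ℝ) (hq : ∀ b c, 0 ≤ q b c) :
    ∑ b, ∑ c, negMulLog (q b c) + negMulLog (∑ b, ∑ c, q b c)
      ≤ ∑ b, negMulLog (∑ c, q b c) + ∑ c, negMulLog (∑ b, q b c) := by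
  set r : β → ℝ := fun b => ∑ c, q b c
  set s : γ → ℝ := fun c => ∑ b, q b c
  set T := ∑ b, r b
  show ∑ b, ∑ c, negMulLog (q b c) + negMulLog T ≤ ∑ b, negMulLog (r b) + ∑ c, negMulLog (s c)
  have hr : ∀ b c, q b c ≤ r b := fun b c => single_le_sum (fun c _ => hq b c) (mem_univ c)
  have hs : ∀ b c, q b c ≤ s c := fun b c => single_le_sum (fun b _ => hq b c) (mem_univ b)
  have hrT : ∀ b, r b ≤ T := fun b =>
    single_le_sum (fun b _ => sum_nonneg fun c _ => hq b c) (mem_univ b)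
  have hT0 : 0 ≤ T := sum_nonneg fun b _ => sum_nonneg fun c _ => hq b c
  have hTs : ∑ c, s c = T := sum_comm
  -- Gibbs against the product of the marginals, `q b c` versus `r b * s c / T`.
  have hgibbs := sum_mul_log_le_sum_mul_log univ (p := fun bc : β × γ => q bc.1 bc.2)
    (q := fun bc => r bc.1 * s bc.2 / T) (fun bc _ => hq _ _)
    (fun bc _ => div_nonneg (mul_nonneg ((hq bc.1 bc.2).trans (hr _ _))
      ((hq bc.1 bc.2).trans (hs _ _))) hT0)
    (fun bc _ h => div_pos (mul_pos (h.trans_le (hr _ _)) (h.trans_le (hs _ _)))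
      (h.trans_le ((hr _ _).trans (hrT _))))
    (by
      rw [Fintype.sum_prod_type, Fintype.sum_prod_type]
      simp only [mul_div_assoc, ← mul_sum, ← sum_div, hTs, ← sum_mul]
      show T * (T / T) ≤ T
      rcases hT0.eq_or_lt with h | h
      · simp [← h]
      · rw [div_self h.ne', mul_one])
  rw [Fintype.sum_prod_type, Fintype.sum_prod_type] at hgibbs
  have hsplit : ∀ b c, q b c * log (r b * s c / T)
      = q b c * log (r b) + q b c * log (s c) - q b c * log T := by
    intro b c
    rcases (hq b c).eq_or_lt with h0 | h0
    · simp [← h0]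
    · have hrb := h0.trans_le (hr b c)
      have hsc := h0.trans_le (hs b c)
      rw [log_div (mul_pos hrb hsc).ne' (hrb.trans_le (hrT b)).ne', log_mul hrb.ne' hsc.ne']
      ring
  simp only [hsplit, sum_sub_distrib, sum_add_distrib, ← sum_mul] at hgibbs
  rw [sum_comm (f := fun b c => q b c * log (s c))] at hgibbs
  simp only [← sum_mul] at hgibbs
  simp only [negMulLog, neg_mul, sum_neg_distrib]
  linarith

section ShannonEntropy

variable {Ω : Type} [MeasurableSpace Ω] {μ : Measure Ω} {α β γ : Type}

theorem measurableSet_preimage_pair {f : Ω → α} {g : Ω → β}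
    (hf : ∀ a, MeasurableSet (f ⁻¹' {a})) (hg : ∀ b, MeasurableSet (g ⁻¹' {b})) (x : α × β) :
    MeasurableSet ((fun ω => (f ω, g ω)) ⁻¹' {x}) := by
  rw [← Prod.mk.eta (p := x), ← Set.singleton_prod_singleton, Set.mk_preimage_prod]
  exact (hf _).inter (hg _)

variable [Fintype α] [Fintype β] [Fintype γ]

theorem shannonEntropy_eq_sum_measureReal (f : Ω → α) :
    shannonEntropy μ f = ∑ a, negMulLog (μ.real (f ⁻¹' {a})) := rfl

theorem shannonEntropy_pair (f : Ω → α) (g : Ω → β) :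
    shannonEntropy μ (fun ω => (f ω, g ω))
      = ∑ a, ∑ b, negMulLog (μ.real (f ⁻¹' {a} ∩ g ⁻¹' {b})) := by
  simp only [shannonEntropy_eq_sum_measureReal, Fintype.sum_prod_type,
    ← Set.singleton_prod_singleton, Set.mk_preimage_prod]

theorem measureReal_eq_sum_inter_preimage [IsFiniteMeasure μ] (E : Set Ω) {g : Ω → β} (hg : ∀ b, MeasurableSet (g ⁻¹' {b})) :
    μ.real E = ∑ b, μ.real (E ∩ g ⁻¹' {b}) := by
  have := sum_measureReal_preimage_singleton (μ := μ.restrict E) univ (fun b _ => hg b)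
  simp only [measureReal_restrict_apply (hg _), coe_univ, Set.preimage_univ,
    measureReal_restrict_apply_univ] at this
  simp only [this, Set.inter_comm E]

theorem shannonEntropy_comp_le [IsFiniteMeasure μ] {g : Ω → β}
    (hg : ∀ b, MeasurableSet (g ⁻¹' {b})) (φ : β → α) :
    shannonEntropy μ (φ ∘ g) ≤ shannonEntropy μ g := by
  classical
  have hfiber : ∀ a, μ.real ((φ ∘ g) ⁻¹' {a}) = ∑ b ∈ univ with φ b = a, μ.real (g ⁻¹' {b}) := by
    intro a
    rw [sum_measureReal_preimage_singleton _ fun b _ => hg b]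
    congr 1
    ext ω
    simp
  calc shannonEntropy μ (φ ∘ g)
      = ∑ a, negMulLog (∑ b ∈ univ with φ b = a, μ.real (g ⁻¹' {b})) := by
        simp only [shannonEntropy_eq_sum_measureReal, hfiber]
    _ ≤ ∑ a, ∑ b ∈ univ with φ b = a, negMulLog (μ.real (g ⁻¹' {b})) :=
        sum_le_sum fun a _ => negMulLog_sum_le_sum_negMulLog _ fun b _ => measureReal_nonneg
    _ = shannonEntropy μ g := sum_fiberwise univ φ _

theorem shannonEntropy_congr [IsFiniteMeasure μ] {f : Ω → α} {g : Ω → β}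
    (hf : ∀ a, MeasurableSet (f ⁻¹' {a})) (hg : ∀ b, MeasurableSet (g ⁻¹' {b}))
    (φ : α → β) (ψ : β → α) (hgf : g = φ ∘ f) (hfg : f = ψ ∘ g) :
    shannonEntropy μ g = shannonEntropy μ f := by
  refine le_antisymm ?_ ?_
  · conv_lhs => rw [hgf]
    exact shannonEntropy_comp_le hf φ
  · conv_lhs => rw [hfg]
    exact shannonEntropy_comp_le hg ψ

theorem shannonEntropy_pair_le_add [IsProbabilityMeasure μ] {g : Ω → β} {h : Ω → γ}
    (hg : ∀ b, MeasurableSet (g ⁻¹' {b})) (hh : ∀ c, MeasurableSet (h ⁻¹' {c})) :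
    shannonEntropy μ (fun ω => (g ω, h ω)) ≤ shannonEntropy μ g + shannonEntropy μ h := by
  have hmarg_g : ∀ b, μ.real (g ⁻¹' {b}) = ∑ c, μ.real (g ⁻¹' {b} ∩ h ⁻¹' {c}) :=
    fun b => measureReal_eq_sum_inter_preimage _ hh
  have hmarg_h : ∀ c, μ.real (h ⁻¹' {c}) = ∑ b, μ.real (g ⁻¹' {b} ∩ h ⁻¹' {c}) := fun c => by
    rw [measureReal_eq_sum_inter_preimage _ hg]
    simp only [Set.inter_comm (h ⁻¹' {c})]
  have htotal : ∑ b, ∑ c, μ.real (g ⁻¹' {b} ∩ h ⁻¹' {c}) = 1 := by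
    simp only [← hmarg_g]
    rw [sum_measureReal_preimage_singleton _ fun b _ => hg b]
    simp
  have := sum_sum_negMulLog_add_negMulLog_sum_sum_le _ fun b c => measureReal_nonneg
    (μ := μ) (s := g ⁻¹' {b} ∩ h ⁻¹' {c})
  rw [htotal, negMulLog_one, add_zero] at this
  rw [shannonEntropy_pair, shannonEntropy_eq_sum_measureReal, shannonEntropy_eq_sum_measureReal]
  simpa only [hmarg_g, hmarg_h]

theorem shannonEntropy_submodular [IsFiniteMeasure μ] (f : Ω → α) {g : Ω → β} {h : Ω → γ}
    (hg : ∀ b, MeasurableSet (g ⁻¹' {b}))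
    (hh : ∀ c, MeasurableSet (h ⁻¹' {c})) :
    shannonEntropy μ (fun ω => (f ω, g ω, h ω)) + shannonEntropy μ f
      ≤ shannonEntropy μ (fun ω => (f ω, g ω)) + shannonEntropy μ (fun ω => (f ω, h ω)) := by
  set q : α → β → γ → ℝ := fun a b c => μ.real (f ⁻¹' {a} ∩ g ⁻¹' {b} ∩ h ⁻¹' {c})
  have hfg : ∀ a b, μ.real (f ⁻¹' {a} ∩ g ⁻¹' {b}) = ∑ c, q a b c :=
    fun a b => measureReal_eq_sum_inter_preimage _ hh
  have hfh : ∀ a c, μ.real (f ⁻¹' {a} ∩ h ⁻¹' {c}) = ∑ b, q a b c := fun a c => by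
    rw [measureReal_eq_sum_inter_preimage _ hg]
    simp only [q, Set.inter_right_comm _ (h ⁻¹' {c})]
  have hf' : ∀ a, μ.real (f ⁻¹' {a}) = ∑ b, ∑ c, q a b c := fun a => by
    rw [measureReal_eq_sum_inter_preimage _ hg]
    simp only [hfg]
  have hfgh : shannonEntropy μ (fun ω => (f ω, g ω, h ω)) = ∑ a, ∑ b, ∑ c, negMulLog (q a b c) := by
    simp only [shannonEntropy_pair, Fintype.sum_prod_type, ← Set.singleton_prod_singleton,
      Set.mk_preimage_prod, Set.inter_assoc, q]
  rw [hfgh, shannonEntropy_pair, shannonEntropy_pair, shannonEntropy_eq_sum_measureReal]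
  simp only [hfg, hfh, hf', ← sum_add_distrib]
  exact sum_le_sum fun a _ =>
    sum_sum_negMulLog_add_negMulLog_sum_sum_le (q a) fun b c => measureReal_nonneg

end ShannonEntropy

namespace Scheme

variable {P : Type} [Fintype P] [DecidableEq P] (S : Scheme P)

attribute [local instance] mΩ prob secFin shFin

def shares (X : Finset P) (ω : S.Ω) : (p : X) → S.ShT p := fun p => S.share p ω

theorem Hset_eq (X : Finset P) : S.Hset X = shannonEntropy S.μ (S.shares X) := rfl

theorem HsetS_eq (X : Finset P) :
    S.HsetS X = shannonEntropy S.μ (fun ω => (S.shares X ω, S.secret ω)) := rfl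

theorem measurableSet_shares_preimage (X : Finset P) (F : (p : X) → S.ShT p) :
    MeasurableSet (S.shares X ⁻¹' {F}) := by
  have : S.shares X ⁻¹' {F} = ⋂ p : X, S.share p ⁻¹' {F p} := by
    ext ω
    simp [shares, funext_iff]
  rw [this]
  exact MeasurableSet.iInter fun p => S.share_meas p _

theorem measurableSet_sharesSecret_preimage (X : Finset P) (x : ((p : X) → S.ShT p) × S.SecT) :
    MeasurableSet ((fun ω => (S.shares X ω, S.secret ω)) ⁻¹' {x}) :=
  measurableSet_preimage_pair (S.measurableSet_shares_preimage X) (fun _ => S.secret_meas _) x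

variable {S}

def restrictShares {U V : Finset P} (h : U ⊆ V) (F : (p : V) → S.ShT p) : (p : U) → S.ShT p :=
  fun p => F ⟨p, h p.2⟩

def unionShares {U V : Finset P} (F : (p : U) → S.ShT p) (G : (p : V) → S.ShT p) :
    (p : ↥(U ∪ V)) → S.ShT p :=
  fun p => if h : p.1 ∈ U then F ⟨p, h⟩ else G ⟨p, (mem_union.1 p.2).resolve_left h⟩

variable (S)

theorem shares_union (U V : Finset P) (ω : S.Ω) :
    S.shares (U ∪ V) ω = unionShares (S.shares U ω) (S.shares V ω) := by
  funext p
  unfold unionShares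
  split_ifs <;> rfl

theorem Hset_union_le (U V : Finset P) : S.Hset (U ∪ V) ≤ S.Hset U + S.Hset V := by
  rw [Hset_eq, ← shannonEntropy_congr (S.measurableSet_shares_preimage _)
    (measurableSet_preimage_pair (S.measurableSet_shares_preimage U)
      (S.measurableSet_shares_preimage V))
    (fun F => (restrictShares subset_union_left F, restrictShares subset_union_right F))
    (fun FG => unionShares FG.1 FG.2) rfl (funext (S.shares_union U V))]
  exact shannonEntropy_pair_le_add (S.measurableSet_shares_preimage U)
    (S.measurableSet_shares_preimage V)

theorem HsetS_mono {U V : Finset P} (h : U ⊆ V) : S.HsetS U ≤ S.HsetS V :=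
  shannonEntropy_comp_le (μ := S.μ) (S.measurableSet_sharesSecret_preimage V)
    fun Fs => (restrictShares h Fs.1, Fs.2)

theorem HsetS_submodular {A B : Finset P} (hAB : A ⊆ B) (C : Finset P) :
    S.HsetS (B ∪ C) + S.HsetS A ≤ S.HsetS (A ∪ C) + S.HsetS B := by
  have hAC := shannonEntropy_congr (μ := S.μ) (S.measurableSet_sharesSecret_preimage (A ∪ C))
    (measurableSet_preimage_pair (S.measurableSet_sharesSecret_preimage A)
      (S.measurableSet_shares_preimage C))
    (fun Fs => ((restrictShares subset_union_left Fs.1, Fs.2),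
      restrictShares subset_union_right Fs.1))
    (fun FsG => (unionShares FsG.1.1 FsG.2, FsG.1.2)) rfl
    (funext fun ω => by simp only [Function.comp, shares_union])
  have hB := shannonEntropy_congr (μ := S.μ) (S.measurableSet_sharesSecret_preimage B)
    (measurableSet_preimage_pair (S.measurableSet_sharesSecret_preimage A)
      (S.measurableSet_shares_preimage B))
    (fun Fs => ((restrictShares hAB Fs.1, Fs.2), Fs.1))
    (fun FsG => (FsG.2, FsG.1.2)) rfl rfl
  have hBC := shannonEntropy_congr (μ := S.μ) (S.measurableSet_sharesSecret_preimage (B ∪ C))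
    (measurableSet_preimage_pair (S.measurableSet_sharesSecret_preimage A)
      (measurableSet_preimage_pair (S.measurableSet_shares_preimage C)
        (S.measurableSet_shares_preimage B)))
    (fun Fs => ((restrictShares (hAB.trans subset_union_left) Fs.1, Fs.2),
      restrictShares subset_union_right Fs.1, restrictShares subset_union_left Fs.1))
    (fun FsGH => (unionShares FsGH.2.2 FsGH.2.1, FsGH.1.2)) rfl
    (funext fun ω => by simp only [Function.comp, shares_union])
  rw [HsetS_eq, HsetS_eq, HsetS_eq, HsetS_eq, ← hAC, ← hB, ← hBC]
  exact shannonEntropy_submodular _ (S.measurableSet_shares_preimage C)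
    (S.measurableSet_shares_preimage B)

theorem Hset_add_two_mul_Hsec_le {Γ : Finset P → Prop} (hΓ : Monotone Γ) (hS : S.IsPerfect Γ)
    {V A B C : Finset P} (hV : ¬ Γ V) (hVBC : V ⊆ B ∪ C) (hB : Γ B) (hAB : A ⊆ B)
    (hA : ¬ Γ A) (hAC : Γ (A ∪ C)) :
    S.Hset V + 2 * S.Hsec ≤ S.Hset B + S.Hset C := by
  have hV' := hS.2 V hV
  have hB' := hS.1 B hB
  have hBC := hS.1 _ (hΓ subset_union_left hB : Γ (B ∪ C))
  have hA' := hS.2 A hA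
  have hAC' := hS.1 _ hAC
  have := S.HsetS_mono hVBC
  have := S.HsetS_submodular hAB C
  have := S.Hset_union_le A C
  linarith

end Scheme

def vamosSpecialSets : Finset (Finset (Fin 8)) :=
  {pairA ∪ pairB, pairA ∪ pairC, pairB ∪ pairC, pairB ∪ pairD, pairC ∪ pairD}

theorem card_of_mem_vamosSpecialSets {D : Finset (Fin 8)} (hD : D ∈ vamosSpecialSets) :
    D.card = 4 := by
  simp only [vamosSpecialSets, mem_insert, mem_singleton] at hD
  rcases hD with rfl | rfl | rfl | rfl | rfl <;> rfl

theorem vamosDep_iff {X : Finset (Fin 8)} : VamosDep X ↔ X ∈ vamosSpecialSets ∨ 5 ≤ X.card := by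
  simp only [VamosDep, vamosSpecialSets, mem_insert, mem_singleton, or_assoc]

theorem vamosCircuit_iff {C : Finset (Fin 8)} :
    VamosCircuit C ↔ C ∈ vamosSpecialSets ∨ (C.card = 5 ∧ ∀ D ∈ vamosSpecialSets, ¬ D ⊆ C) := by
  constructor
  · rintro ⟨hdep, hmin⟩
    refine (vamosDep_iff.1 hdep).imp_right fun h5 => ⟨?_, fun D hD hDC => ?_⟩
    · by_contra hne
      obtain ⟨D, hDC, hD⟩ := exists_subset_card_eq (show 5 ≤ C.card from h5)
      exact hmin D (lt_of_le_of_ne hDC (by rintro rfl; omega))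
        (vamosDep_iff.2 (Or.inr hD.ge))
    · have h4 := card_of_mem_vamosSpecialSets hD
      exact hmin D (lt_of_le_of_ne hDC (by rintro rfl; omega))
        (vamosDep_iff.2 (Or.inl hD))
  · rintro (hC | ⟨h5, hC⟩)
    · have h4 := card_of_mem_vamosSpecialSets hC
      refine ⟨vamosDep_iff.2 (Or.inl hC), fun D hDC hD => ?_⟩
      have hlt := card_lt_card hDC
      rcases vamosDep_iff.1 hD with hD | hD
      · have := card_of_mem_vamosSpecialSets hD; omega
      · omega
    · refine ⟨vamosDep_iff.2 (Or.inr h5.ge), fun D hDC hD => ?_⟩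
      have hlt := card_lt_card hDC
      rcases vamosDep_iff.1 hD with hD | hD
      · exact hC D hD hDC.subset
      · omega

instance : DecidablePred VamosCircuit := fun _ => decidable_of_iff _ vamosCircuit_iff.symm

theorem vamosQualified_iff {x : Fin 8} {T : Finset (Fin 8)} :
    VamosQualified x T ↔ x ∈ T ∨ ∃ M ∈ T.powerset, x ∉ M ∧ VamosCircuit (insert x M) := by
  simp only [VamosQualified, mem_powerset]

instance (x : Fin 8) : DecidablePred (VamosQualified x) :=
  fun _ => decidable_of_iff _ vamosQualified_iff.symm

theorem vamosQualified_monotone (x : Fin 8) : Monotone (VamosQualified x) := by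
  rintro T U hTU (hx | ⟨M, hM, hxM, hC⟩)
  · exact Or.inl (hTU hx)
  · exact Or.inr ⟨M, hM.trans hTU, hxM, hC⟩

instance : DecidablePred IsVamosPair := fun X => by unfold IsVamosPair; infer_instance

theorem IsVamosPair.card_eq_two {X : Finset (Fin 8)} (hX : IsVamosPair X) : X.card = 2 := by
  rcases hX with rfl | rfl | rfl | rfl <;> rfl

theorem exists_isVamosPair_pair (x : Fin 8) : ∃ w, IsVamosPair {x, w} := by
  fin_cases x <;> decide

-- With `Z = {x, w}`: `X ∪ Z` is a circuit if it is special, and otherwise `X ∪ Z ∪ {y₁}` is a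
-- 5-circuit; likewise for `Y ∪ Z` and `{x₁} ∪ Y ∪ Z`. Neither `X ∪ Y ∪ {x}` nor
-- `{x, x₁, w, y₁}` contains a circuit through `x`.
theorem vamos_qualification_pattern {X Y : Finset (Fin 8)} (hX : IsVamosPair X)
    (hY : IsVamosPair Y) (hXY : VamosCircuit (X ∪ Y)) {x : Fin 8} (hxX : x ∉ X) (hxY : x ∉ Y)
    {w : Fin 8} (hw : IsVamosPair {x, w}) {x₁ y₁ y₂ : Fin 8} (hx₁ : x₁ ∈ X) (hy₁ : y₁ ∈ Y)
    (hy₂ : y₂ ∈ Y) (hy : y₁ ≠ y₂) :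
    ¬ VamosQualified x (X ∪ Y) ∧ VamosQualified x (X ∪ {w, y₁}) ∧
      ¬ VamosQualified x {x₁, w, y₁} ∧ VamosQualified x ({x₁, w, y₁} ∪ {y₂}) := by
  revert hXY x hxX hxY w hw x₁ y₁ y₂ hx₁ hy₁ hy₂ hy
  rcases hX with rfl | rfl | rfl | rfl <;> rcases hY with rfl | rfl | rfl | rfl <;> decide +kernel

theorem Scheme.Hset_singleton_le (S : Scheme (Fin 8)) (hpos : 0 < S.Hsec) (v : Fin 8) :
    S.Hset {v} ≤ (S.lam + 1) * S.Hsec := by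
  have : S.hset {v} ≤ S.lam + 1 := by
    rw [Scheme.lam, sub_add_cancel]
    exact le_sup' (fun i => S.hset {i}) (mem_univ v)
  rwa [Scheme.hset, div_le_iff₀ hpos] at this

theorem hcond_le_one_add_three_lam_general (x : Fin 8)
    (S : Scheme (Fin 8)) (hperf : S.IsPerfect (VamosQualified x)) (hpos : 0 < S.Hsec)
    (X Y : Finset (Fin 8)) (hX : IsVamosPair X) (hY : IsVamosPair Y)
    (hcirc : VamosCircuit (X ∪ Y)) (hxX : x ∉ X) (hxY : x ∉ Y) :
    S.hcond Y X ≤ 1 + 3 * S.lam := by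
  obtain ⟨y₁, y₂, hy, rfl⟩ := card_eq_two.1 hY.card_eq_two
  obtain ⟨x₁, hx₁⟩ := card_pos.1 (hX.card_eq_two ▸ two_pos)
  obtain ⟨w, hw⟩ := exists_isVamosPair_pair x
  obtain ⟨hV, hB, hA, hAC⟩ := vamos_qualification_pattern hX hY hcirc hxX hxY hw hx₁
    (mem_insert_self _ _) (mem_insert_of_mem (mem_singleton_self _)) hy
  have key := S.Hset_add_two_mul_Hsec_le (vamosQualified_monotone x) hperf hV
    (by intro z; simp only [mem_union, mem_insert, mem_singleton]; tauto) hB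
    (by intro z; simp only [mem_union, mem_insert, mem_singleton]; rintro (rfl | h) <;> tauto)
    hA hAC
  have hwy := S.Hset_union_le {w} {y₁}
  rw [← insert_eq] at hwy
  have hsing := S.Hset_singleton_le hpos
  rw [Scheme.hcond, Scheme.hset, Scheme.hset, ← sub_div, div_le_iff₀ hpos, union_comm]
  linarith [S.Hset_union_le X {w, y₁}, hsing w, hsing y₁, hsing y₂]

/-- If `X`, `Y` are distinct Vamos pairs with `X ∪ Y` a circuit and the dealer a
member of neither `X` nor `Y`, then `h(Y|X) ≤ 1 + 3λ`. -/
theorem hcond_le_one_add_three_lam (x : Fin 8)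
    (S : Scheme (Fin 8)) (hperf : S.IsPerfect (VamosQualified x)) (hpos : 0 < S.Hsec)
    (X Y : Finset (Fin 8)) (hX : IsVamosPair X) (hY : IsVamosPair Y) (hne : X ≠ Y)
    (hcirc : VamosCircuit (X ∪ Y)) (hxX : x ∉ X) (hxY : x ∉ Y) :
    S.hcond Y X ≤ 1 + 3 * S.lam :=
  hcond_le_one_add_three_lam_general x S hperf hpos X Y hX hY hcirc hxX hxY
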